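/- arXiv:2411.16284 — 7 statements merged into one kernel-verified Lean document; each statement's English description precedes it below -/
import Mathlib

section
/- In any band S, if a ∼ℓ b (i.e., ab = a and ba = b) then a ∼n b, where ∼n is Konieczny's conjugacy: there exist g, h in S¹ such that ag = gb, bh = ha, hag = b, and gbh = a. -/
/-- In any band, `a ∼ℓ b` (i.e. `ab = a` and `ba = b`) implies `a ∼n b`
(Konieczny conjugacy, with `g, h` taken in `S¹ = WithOne S`). -/
theorem stmt_2 {S : Type*} [Semigroup S] (hband : ∀ a : S, a * a = a)
    (a b : S) (hl : a * b = a ∧ b * a = b) :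
    ∃ g h : WithOne S,
      (a : WithOne S) * g = g * (b : WithOne S) ∧
      (b : WithOne S) * h = h * (a : WithOne S) ∧
      h * (a : WithOne S) * g = (b : WithOne S) ∧
      g * (b : WithOne S) * h = (a : WithOne S) := by
  obtain ⟨h1, h2⟩ := hl
  exact ⟨(a : WithOne S), (b : WithOne S),
    by norm_cast; rw [hband, h1],
    by norm_cast; rw [hband, h2],
    by norm_cast; rw [h2, h2],
    by norm_cast; rw [h1, h1]⟩
end

section
/- In the semigroup on X defined by (a,b)(c,d) = (max(a,c), b) (a semilattice of left-zero semigroups), two elements (a,b) and (c,d) satisfy: there exist g, h in the semigroup with gh = (a,b) and hg = (c,d), if and only if a = c. In particular ∼p equals ∼ℓ equals the partition relation. -/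
/-- The underlying set: pairs `(i, j)` with `i` the block index and `j` in the block
attached to `i` (membership predicate `P`). -/
def BlockSet {I J : Type*} (P : I → J → Prop) := {p : I × J // P p.1 p.2}

/-- Multiplication `(a,b)(c,d) = (max(a,c), b)`. -/
def blockMul {I J : Type*} [LinearOrder I] (P : I → J → Prop)
    (hmono : ∀ i i' j, i ≤ i' → P i j → P i' j) :
    BlockSet P → BlockSet P → BlockSet P :=
  fun x y => ⟨(max x.1.1 y.1.1, x.1.2), hmono _ _ _ (le_max_left _ _) x.2⟩

/-- In the semigroup `(a,b)(c,d) = (max(a,c), b)` (a semilattice of left-zero semigroups),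
two elements are `∼p`-related (`∃ g h, gh = x ∧ hg = y`) iff they lie in the same block;
and this also coincides with `∼ℓ` (`xy = x ∧ yx = y`). -/
theorem stmt_4 {I J : Type*} [LinearOrder I] (P : I → J → Prop)
    (hmono : ∀ i i' j, i ≤ i' → P i j → P i' j) (x y : BlockSet P) :
    ((∃ g h : BlockSet P, blockMul P hmono g h = x ∧ blockMul P hmono h g = y) ↔
      x.1.1 = y.1.1) ∧
    ((blockMul P hmono x y = x ∧ blockMul P hmono y x = y) ↔ x.1.1 = y.1.1) := by
  have key : ∀ z w : BlockSet P, (blockMul P hmono z w = z ∧ blockMul P hmono w z = w)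
      ↔ z.1.1 = w.1.1 := by
    intro z w
    constructor
    · rintro ⟨h1, h2⟩
      have e1 := congrArg (fun t : BlockSet P => t.1.1) h1
      have e2 := congrArg (fun t : BlockSet P => t.1.1) h2
      simp only [blockMul] at e1 e2
      exact le_antisymm (sup_eq_left.mp e2) (sup_eq_left.mp e1)
    · intro h
      constructor <;> apply Subtype.ext <;> apply Prod.ext <;>
        simp [blockMul, h, max_self]
  refine ⟨?_, key x y⟩
  constructor
  · rintro ⟨g, h, rfl, rfl⟩
    simp [blockMul, max_comm]
  · intro h
    exact ⟨x, y, (key x y).2 h⟩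
end

section
/- In the monoid S presented by ⟨a, b | aab = bba⟩, the elements aba and aab are ∼p-related, the elements bba and bab are ∼p-related, but aba and bab are not ∼p-related; since aab = bba in S, the relation ∼p is not transitive on S. -/
/-!
The relations `aba ∼p aab` and `bba ∼p bab` are visible from the factorisations `(ab)a`, `a(ab)`
and `b(ba)`, `(ba)b`. To separate `aba` from `bab`, map `S` onto a six-element monoid of maps
`Fin 3 → Fin 3`: a factorisation `aba = uv` with `vu = bab` would survive in the image, and a
finite check over the image rules it out.
-/

/-- The defining relation `aab = bba` on the free monoid on two generators. -/
def aabRel : FreeMonoid (Fin 2) → FreeMonoid (Fin 2) → Prop := fun x y =>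
  x = FreeMonoid.of 0 * FreeMonoid.of 0 * FreeMonoid.of 1 ∧
  y = FreeMonoid.of 1 * FreeMonoid.of 1 * FreeMonoid.of 0

/-- The monoid `⟨a, b | aab = bba⟩`. -/
abbrev AabMonoid := (conGen aabRel).Quotient

/-- The images of the generators `a` and `b`. -/
def genA : AabMonoid := (conGen aabRel).mk' (FreeMonoid.of 0)
def genB : AabMonoid := (conGen aabRel).mk' (FreeMonoid.of 1)

/-- `x ∼p y` iff `x = uv` and `y = vu` for some `u, v`. -/
def pRel {S : Type*} [Mul S] (x y : S) : Prop := ∃ u v : S, x = u * v ∧ y = v * u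

theorem pRel_mul_mul {S : Type*} [Mul S] (u v : S) : pRel (u * v) (v * u) := ⟨u, v, rfl, rfl⟩

theorem pRel.map_of_forall_mem {S T F : Type*} [Mul S] [Mul T] [FunLike F S T] [MulHomClass F S T]
    (f : F) (R : Set T) (hR : ∀ s, f s ∈ R) {x y : S} (h : pRel x y) :
    ∃ u ∈ R, ∃ v ∈ R, f x = u * v ∧ f y = v * u := by
  obtain ⟨u, v, rfl, rfl⟩ := h
  exact ⟨f u, hR u, f v, hR v, map_mul f u v, map_mul f v u⟩

theorem genA_mul_genA_mul_genB : genA * genA * genB = genB * genB * genA :=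
  (Con.eq _).2 (ConGen.Rel.of _ _ ⟨rfl, rfl⟩)

instance : DecidableEq (Function.End (Fin 3)) :=
  inferInstanceAs (DecidableEq (Fin 3 → Fin 3))

def modelA : Function.End (Fin 3) := ![0, 0, 1]
def modelB : Function.End (Fin 3) := ![0, 2, 0]

def toModelFree : FreeMonoid (Fin 2) →* Function.End (Fin 3) := FreeMonoid.lift ![modelA, modelB]

theorem conGen_aabRel_le_ker_toModelFree : conGen aabRel ≤ Con.ker toModelFree := by
  refine Con.conGen_le.2 ?_
  rintro x y ⟨rfl, rfl⟩
  rw [Con.ker_rel]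
  simp only [map_mul, toModelFree, FreeMonoid.lift_eval_of]
  decide

def toModel : AabMonoid →* Function.End (Fin 3) :=
  Con.lift _ toModelFree conGen_aabRel_le_ker_toModelFree

theorem toModel_genA : toModel genA = modelA := FreeMonoid.lift_eval_of _ _

theorem toModel_genB : toModel genB = modelB := FreeMonoid.lift_eval_of _ _

/-- The submonoid of `Function.End (Fin 3)` generated by `modelA` and `modelB`. -/
def modelImage : Finset (Function.End (Fin 3)) :=
  {1, modelA, modelB, ![0, 0, 0], ![0, 0, 2], ![0, 1, 0]}

theorem toModelFree_mem_modelImage (w : FreeMonoid (Fin 2)) : toModelFree w ∈ modelImage := by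
  induction w using FreeMonoid.recOn with
  | one => simp [modelImage]
  | of_mul i w ih =>
    have hclosed : ∀ f ∈ modelImage, ∀ i, ![modelA, modelB] i * f ∈ modelImage := by decide
    rw [map_mul, toModelFree, FreeMonoid.lift_eval_of]
    exact hclosed _ ih i

theorem toModel_mem_modelImage (s : AabMonoid) : toModel s ∈ modelImage :=
  Con.induction_on s toModelFree_mem_modelImage

theorem not_pRel_aba_bab : ¬ pRel (genA * genB * genA) (genB * genA * genB) := fun h => by
  obtain ⟨u, hu, v, hv, huv, hvu⟩ :=
    h.map_of_forall_mem toModel modelImage toModel_mem_modelImage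
  simp only [map_mul, toModel_genA, toModel_genB] at huv hvu
  revert u v huv hvu
  decide

/-- In the monoid `⟨a, b | aab = bba⟩`: `aba ∼p aab`, `bba ∼p bab`, but `aba ≁p bab`;
since `aab = bba`, the relation `∼p` is not transitive. -/
theorem stmt_7 :
    pRel (genA * genB * genA) (genA * genA * genB) ∧
    pRel (genB * genB * genA) (genB * genA * genB) ∧
    ¬ pRel (genA * genB * genA) (genB * genA * genB) ∧
    genA * genA * genB = genB * genB * genA ∧
    ¬ Transitive (pRel (S := AabMonoid)) := by
  have haba : pRel (genA * genB * genA) (genA * genA * genB) := by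
    simpa only [mul_assoc] using pRel_mul_mul (genA * genB) genA
  have hbba : pRel (genB * genB * genA) (genB * genA * genB) := by
    simpa only [mul_assoc] using pRel_mul_mul genB (genB * genA)
  refine ⟨haba, hbba, not_pRel_aba_bab, genA_mul_genA_mul_genB, fun htrans => ?_⟩
  exact not_pRel_aba_bab (htrans haba (genA_mul_genA_mul_genB ▸ hbba))
end

section
/- The monoid ⟨a, b | aab = bba⟩ embeds into a group, yet ∼p is not transitive on it. Hence there exists a group-embeddable semigroup on which ∼p fails to be transitive. -/
/-!
The maps `x ↦ φ x` and `x ↦ φ x + 1` of `ℝ` satisfy `a a b = b b a` because `φ² = φ + 1`,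
so a word `w` acts as `x ↦ φ ^ |w| * x + v(w)`, where `v(w)` reads `w` as a base-`φ` numeral
with its first letter least significant. Rewriting `bba` to `aab` lowers the number of `b`s,
so every element is represented by a word without the factor `bba`. In such a word ending in
`a`, the lower digits sum to less than the weight of the last position (a Zeckendorf-type
bound), so two such words with equal length and value have equal last letters, and by
induction they coincide: the action is faithful.

The same invariant refutes transitivity: `baa ∼p aab = bba ∼p abb`, while `baa = uv`,
`abb = vu` would give `v(u) + φ ^ |u| * v(v) = 1` and `v(v) + φ ^ |v| * v(u) = φ³`, which
force `v(v) = 0` and `|u| = 0`, hence `v(u) = 0 ≠ 1`.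
-/

namespace AabMonoid

open FreeMonoid Real goldenRatio

noncomputable def goldenValue : List (Fin 2) → ℝ
  | [] => 0
  | l :: t => l + φ * goldenValue t

@[simp] lemma goldenValue_nil : goldenValue [] = 0 := rfl

@[simp] lemma goldenValue_cons (l : Fin 2) (t : List (Fin 2)) :
    goldenValue (l :: t) = l + φ * goldenValue t := rfl

lemma goldenValue_nonneg (w : List (Fin 2)) : 0 ≤ goldenValue w := by
  induction w with
  | nil => rfl
  | cons l t ih => simp only [goldenValue_cons]; positivity

lemma goldenValue_append (p q : List (Fin 2)) :
    goldenValue (p ++ q) = goldenValue p + φ ^ p.length * goldenValue q := by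
  induction p with
  | nil => simp
  | cons l t ih =>
    simp only [List.cons_append, goldenValue_cons, ih, List.length_cons, pow_succ]
    ring

lemma goldenValue_concat (w : List (Fin 2)) (l : Fin 2) :
    goldenValue (w ++ [l]) = goldenValue w + l * φ ^ w.length := by
  simp [goldenValue_append, mul_comm]

def IsReduced (w : List (Fin 2)) : Prop := ¬ [1, 1, 0] <:+: w

lemma IsReduced.of_concat {w : List (Fin 2)} {l : Fin 2} (h : IsReduced (w ++ [l])) :
    IsReduced w :=
  fun hw => h (hw.trans (List.prefix_append w [l]).isInfix)

lemma infix_cons_one_cons_one_concat_zero (t : List (Fin 2)) :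
    [1, 1, 0] <:+: 1 :: 1 :: (t ++ [0]) := by
  induction t with
  | nil => exact List.infix_refl _
  | cons l s ih =>
    match l with
    | 0 => exact (List.prefix_append _ _).isInfix
    | 1 => exact ih.trans (List.infix_cons List.infix_rfl)

-- Equality holds for `w = 1 0 1 0 … 1`; note that `φ ^ n - φ + 1 = φ ^ n - φ⁻¹`.
lemma goldenValue_le_of_isReduced_concat_zero :
    ∀ w : List (Fin 2), IsReduced (w ++ [0]) → goldenValue w ≤ φ ^ w.length - φ + 1
  | [], _ => by
    simp only [goldenValue_nil, List.length_nil, pow_zero]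
    linarith [goldenRatio_lt_two]
  | [1], _ => by simp
  | 0 :: t, h => by
    have ih := goldenValue_le_of_isReduced_concat_zero t
      fun ht => h (ht.trans (List.infix_cons List.infix_rfl))
    simp only [goldenValue_cons, List.length_cons, pow_succ, Fin.val_zero, Nat.cast_zero]
    nlinarith [mul_le_mul_of_nonneg_left ih goldenRatio_pos.le, goldenRatio_lt_two, goldenRatio_sq]
  | 1 :: 0 :: t, h => by
    have ih := goldenValue_le_of_isReduced_concat_zero t
      fun ht => h (ht.trans (List.infix_cons (List.infix_cons List.infix_rfl)))
    simp only [goldenValue_cons, List.length_cons, pow_succ, Fin.val_zero, Fin.val_one,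
      Nat.cast_zero, Nat.cast_one]
    nlinarith [mul_le_mul_of_nonneg_left ih (sq_nonneg φ), goldenRatio_sq]
  | 1 :: 1 :: t, h => absurd (infix_cons_one_cons_one_concat_zero t) h

lemma goldenValue_concat_one_ne {u v : List (Fin 2)} (hlen : u.length = v.length)
    (hv : IsReduced (v ++ [0])) : goldenValue (u ++ [1]) ≠ goldenValue (v ++ [0]) := by
  have hbound := goldenValue_le_of_isReduced_concat_zero v hv
  simp only [goldenValue_concat, Fin.val_zero, Fin.val_one, Nat.cast_zero, Nat.cast_one,
    zero_mul, one_mul, add_zero, hlen]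
  linarith [goldenValue_nonneg u, one_lt_goldenRatio]

lemma eq_of_isReduced {u v : List (Fin 2)} (hu : IsReduced u) (hv : IsReduced v)
    (hlen : u.length = v.length) (hval : goldenValue u = goldenValue v) : u = v := by
  induction u using List.reverseRecOn generalizing v with
  | nil => exact (List.length_eq_zero_iff.mp hlen.symm).symm
  | append_singleton u a ih =>
    obtain ⟨v, b, rfl⟩ : ∃ v' b, v = v' ++ [b] := by
      rcases v.eq_nil_or_concat with rfl | ⟨v', b, rfl⟩
      · simp at hlen
      · exact ⟨v', b, List.concat_eq_append⟩
    have hlen' : u.length = v.length := by simpa using hlen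
    have hab : a = b := by
      match a, b with
      | 0, 0 | 1, 1 => rfl
      | 0, 1 => exact absurd hval.symm (goldenValue_concat_one_ne hlen'.symm hu)
      | 1, 0 => exact absurd hval (goldenValue_concat_one_ne hlen' hv)
    subst hab
    rw [ih hu.of_concat hv.of_concat hlen' (by simpa [goldenValue_concat, hlen'] using hval)]

def ofWord (w : List (Fin 2)) : AabMonoid := (conGen aabRel).mk' (ofList w)

lemma ofWord_append (p q : List (Fin 2)) : ofWord (p ++ q) = ofWord p * ofWord q := rfl

lemma ofWord_surjective : Function.Surjective ofWord := fun m =>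
  let ⟨x, hx⟩ := Con.mk'_surjective m
  ⟨toList x, hx⟩

lemma ofWord_aab : ofWord [0, 0, 1] = ofWord [1, 1, 0] :=
  (Con.eq _).mpr (ConGen.Rel.of _ _ ⟨rfl, rfl⟩)

lemma exists_isReduced_ofWord_eq (w : List (Fin 2)) :
    ∃ w', IsReduced w' ∧ ofWord w' = ofWord w := by
  by_cases h : [1, 1, 0] <:+: w
  · obtain ⟨s, t, rfl⟩ := h
    obtain ⟨w', hw', e⟩ := exists_isReduced_ofWord_eq (s ++ [0, 0, 1] ++ t)
    refine ⟨w', hw', ?_⟩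
    rw [e, ofWord_append, ofWord_append, ofWord_append, ofWord_append, ofWord_aab]
  · exact ⟨w, h, rfl⟩
termination_by w.count 1
decreasing_by subst_vars; simp [List.count_append]

noncomputable def letterPerm (l : Fin 2) : Equiv.Perm ℝ :=
  (Equiv.mulLeft₀ φ goldenRatio_ne_zero).trans (Equiv.addRight (l : ℝ))

lemma letterPerm_apply (l : Fin 2) (x : ℝ) : letterPerm l x = φ * x + l := rfl

noncomputable def goldenAction : FreeMonoid (Fin 2) →* Equiv.Perm ℝ :=
  FreeMonoid.lift letterPerm

lemma goldenAction_ofList_apply (w : List (Fin 2)) (x : ℝ) :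
    goldenAction (ofList w) x = φ ^ w.length * x + goldenValue w := by
  induction w with
  | nil => simp
  | cons l t ih =>
    rw [ofList_cons, map_mul, Equiv.Perm.mul_apply, ih]
    simp only [goldenAction, lift_eval_of, letterPerm_apply, goldenValue_cons, List.length_cons,
      pow_succ]
    ring

lemma conGen_le_ker_goldenAction : conGen aabRel ≤ Con.ker goldenAction := by
  refine Con.conGen_le.mpr ?_
  rintro x y ⟨rfl, rfl⟩
  refine (Con.ker_rel goldenAction).mpr (Equiv.ext fun x => ?_)
  change goldenAction (ofList [0, 0, 1]) x = goldenAction (ofList [1, 1, 0]) x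
  simp only [goldenAction_ofList_apply, goldenValue_cons, goldenValue_nil, List.length_cons,
    List.length_nil, Fin.val_zero, Fin.val_one, Nat.cast_zero, Nat.cast_one, mul_zero]
  linear_combination goldenRatio_sq

noncomputable def toPerm : AabMonoid →* Equiv.Perm ℝ :=
  Con.lift _ goldenAction conGen_le_ker_goldenAction

lemma toPerm_ofWord_apply (w : List (Fin 2)) (x : ℝ) :
    toPerm (ofWord w) x = φ ^ w.length * x + goldenValue w :=
  goldenAction_ofList_apply w x

lemma length_eq_and_goldenValue_eq {p q : List (Fin 2)}
    (h : toPerm (ofWord p) = toPerm (ofWord q)) :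
    p.length = q.length ∧ goldenValue p = goldenValue q := by
  have h0 := congrArg (· 0) h
  have h1 := congrArg (· 1) h
  simp only [toPerm_ofWord_apply, mul_zero, zero_add, mul_one] at h0 h1
  exact ⟨pow_right_injective₀ goldenRatio_pos one_lt_goldenRatio.ne' (by linarith), h0⟩

lemma toPerm_injective : Function.Injective toPerm := by
  intro m m' h
  obtain ⟨w, rfl⟩ := ofWord_surjective m
  obtain ⟨w', rfl⟩ := ofWord_surjective m'
  obtain ⟨u, hu, huw⟩ := exists_isReduced_ofWord_eq w
  obtain ⟨v, hv, hvw⟩ := exists_isReduced_ofWord_eq w'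
  rw [← huw, ← hvw] at h ⊢
  obtain ⟨hlen, hval⟩ := length_eq_and_goldenValue_eq h
  rw [eq_of_isReduced hu hv hlen hval]

lemma pRel_baa_aab : pRel (ofWord [1, 0, 0]) (ofWord [0, 0, 1]) :=
  ⟨ofWord [1], ofWord [0, 0], rfl, rfl⟩

lemma pRel_aab_abb : pRel (ofWord [0, 0, 1]) (ofWord [0, 1, 1]) :=
  ⟨ofWord [1, 1], ofWord [0], ofWord_aab, rfl⟩

lemma not_pRel_baa_abb : ¬ pRel (ofWord [1, 0, 0]) (ofWord [0, 1, 1]) := by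
  rintro ⟨u, v, hx, hz⟩
  obtain ⟨p, rfl⟩ := ofWord_surjective u
  obtain ⟨q, rfl⟩ := ofWord_surjective v
  rw [← ofWord_append] at hx hz
  obtain ⟨hlen, h1⟩ := length_eq_and_goldenValue_eq (congrArg toPerm hx)
  obtain ⟨-, h2⟩ := length_eq_and_goldenValue_eq (congrArg toPerm hz)
  simp only [goldenValue_append, goldenValue_cons, goldenValue_nil, List.length_append,
    List.length_cons, List.length_nil, Fin.val_zero, Fin.val_one, Nat.cast_zero, Nat.cast_one,
    Nat.reduceAdd, mul_zero, add_zero, zero_add, mul_one] at hlen h1 h2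
  have hpow : φ ^ p.length * φ ^ q.length = φ ^ 3 := by rw [← pow_add, ← hlen]
  have hcube : φ ^ 3 = φ * (1 + φ) := by linear_combination φ * goldenRatio_sq
  have key : (φ ^ 3 - 1) * goldenValue q = φ ^ q.length - φ ^ 3 := by
    linear_combination -φ ^ q.length * h1 + h2 - goldenValue q * hpow + hcube
  have hq : goldenValue q = 0 := by
    have : φ ^ q.length ≤ φ ^ 3 := pow_le_pow_right₀ one_lt_goldenRatio.le (by omega)
    have : 1 < φ ^ 3 := one_lt_pow₀ one_lt_goldenRatio (by norm_num)
    nlinarith [goldenValue_nonneg q]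
  have hq3 : q.length = 3 := pow_right_injective₀ goldenRatio_pos one_lt_goldenRatio.ne'
    (by simpa [hq, sub_eq_zero] using key.symm)
  have hp : p = [] := List.length_eq_zero_iff.mp (by omega)
  simp [hp, hq] at h1

end AabMonoid

/-- The monoid `⟨a, b | aab = bba⟩` embeds into a group, yet `∼p` is not transitive on
it: a group-embeddable semigroup on which `∼p` fails to be transitive. -/
theorem stmt_8 :
    (∃ (G : GrpCat) (f : AabMonoid →* G), Function.Injective f) ∧
    ¬ Transitive (pRel (S := AabMonoid)) := by
  refine ⟨⟨GrpCat.of (ULift (Equiv.Perm ℝ)),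
    MulEquiv.ulift.symm.toMonoidHom.comp AabMonoid.toPerm,
    MulEquiv.ulift.symm.injective.comp AabMonoid.toPerm_injective⟩, fun htrans => ?_⟩
  exact AabMonoid.not_pRel_baa_abb (htrans AabMonoid.pRel_baa_aab AabMonoid.pRel_aab_abb)
end

section
/- For an inverse semigroup and natural numbers i < j: if a ∼n[i] b then a ∼n[j] b. That is, the relations ∼n[k] form an increasing chain under inclusion. -/
/-- `spow a n = a^(n+1)` (positive powers in a semigroup). -/
def spow {S : Type*} [Semigroup S] (a : S) : ℕ → S
  | 0 => a
  | n + 1 => spow a n * a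

/-- `nk inv a k = a^(k+1) * a^(-k)` (interpreted as `a` when `k = 0`). -/
def nk {S : Type*} [Semigroup S] (inv : S → S) (a : S) : ℕ → S
  | 0 => a
  | k + 1 => spow a (k + 1) * spow (inv a) k

/-- `∼n` for inverse semigroups: `a ∼n b` iff there is `g ∈ S¹` with `g⁻¹ag = b` and
`gbg⁻¹ = a` (the case `g = 1` corresponds to `a = b`). -/
def nRel {S : Type*} [Mul S] (inv : S → S) (a b : S) : Prop :=
  a = b ∨ ∃ g : S, inv g * a * g = b ∧ g * b * inv g = a

/-- `a ∼n[k] b` iff `a^(k+1)a^(-k) ∼n b^(k+1)b^(-k)`. -/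
def nkRel {S : Type*} [Semigroup S] (inv : S → S) (k : ℕ) (a b : S) : Prop :=
  nRel inv (nk inv a k) (nk inv b k)

/-- `inv` makes the semigroup `S` an inverse semigroup: each `inv a` is an inverse of
`a`, and idempotents commute (equivalently, inverses are unique). -/
def IsInverseSemigroup {S : Type*} [Semigroup S] (inv : S → S) : Prop :=
  (∀ a : S, a * inv a * a = a) ∧ (∀ a : S, inv a * a * inv a = inv a) ∧
  (∀ e f : S, e * e = e → f * f = f → e * f = f * e)

section Aux

variable {S : Type*} [Semigroup S] (inv : S → S)
variable (h1 : ∀ a : S, a * inv a * a = a)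
variable (h2 : ∀ a : S, inv a * a * inv a = inv a)
variable (h3 : ∀ e f : S, e * e = e → f * f = f → e * f = f * e)

include h1 h2 h3
set_option linter.unusedSectionVars false

lemma aux_idem1 (a : S) : (a * inv a) * (a * inv a) = a * inv a := by
  rw [← mul_assoc, h1]

lemma aux_idem2 (a : S) : (inv a * a) * (inv a * a) = inv a * a := by
  rw [← mul_assoc, h2]

lemma aux_unique (x y z : S) (hxy : x * y * x = x) (hyx : y * x * y = y)
    (hxz : x * z * x = x) (hzx : z * x * z = z) : y = z := by
  have eyx : (y*x)*(y*x) = y*x := by rw [← mul_assoc, hyx]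
  have ezx : (z*x)*(z*x) = z*x := by rw [← mul_assoc, hzx]
  have exy : (x*y)*(x*y) = x*y := by rw [← mul_assoc, hxy]
  have exz : (x*z)*(x*z) = x*z := by rw [← mul_assoc, hxz]
  have key1 : y*x = z*x := by
    calc y*x = y*(x*z*x) := by rw [hxz]
      _ = (y*x)*(z*x) := by simp only [mul_assoc]
      _ = (z*x)*(y*x) := h3 _ _ eyx ezx
      _ = z*(x*y*x) := by simp only [mul_assoc]
      _ = z*x := by rw [hxy]
  have key2 : x*y = x*z := by
    calc x*y = (x*z*x)*y := by rw [hxz]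
      _ = (x*z)*(x*y) := by simp only [mul_assoc]
      _ = (x*y)*(x*z) := h3 _ _ exz exy
      _ = (x*y*x)*z := by simp only [mul_assoc]
      _ = x*z := by rw [hxy]
  calc y = y*x*y := hyx.symm
    _ = (z*x)*y := by rw [key1]
    _ = z*(x*y) := mul_assoc _ _ _
    _ = z*(x*z) := by rw [key2]
    _ = z := by rw [← mul_assoc, hzx]

lemma aux_inv_invol (a : S) : inv (inv a) = a :=
  aux_unique inv h1 h2 h3 (inv a) (inv (inv a)) a (h1 (inv a)) (h2 (inv a)) (h2 a) (h1 a)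

lemma aux_inv_mul (a b : S) : inv (a * b) = inv b * inv a := by
  refine aux_unique inv h1 h2 h3 (a*b) (inv (a*b)) (inv b * inv a) (h1 _) (h2 _) ?_ ?_
  · calc (a*b)*(inv b*inv a)*(a*b)
        = a*((b*inv b)*(inv a*a))*b := by simp only [mul_assoc]
      _ = a*((inv a*a)*(b*inv b))*b := by
            rw [h3 _ _ (aux_idem1 inv h1 h2 h3 b) (aux_idem2 inv h1 h2 h3 a)]
      _ = (a*inv a*a)*(b*inv b*b) := by simp only [mul_assoc]
      _ = a*b := by rw [h1, h1]
  · calc (inv b*inv a)*(a*b)*(inv b*inv a)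
        = inv b*((inv a*a)*(b*inv b))*inv a := by simp only [mul_assoc]
      _ = inv b*((b*inv b)*(inv a*a))*inv a := by
            rw [h3 _ _ (aux_idem2 inv h1 h2 h3 a) (aux_idem1 inv h1 h2 h3 b)]
      _ = (inv b*b*inv b)*(inv a*a*inv a) := by simp only [mul_assoc]
      _ = inv b*inv a := by rw [h2, h2]

lemma aux_spow_succ' (a : S) (m : ℕ) : spow a (m+1) = a * spow a m := by
  induction m with
  | zero => rfl
  | succ m ih =>
    calc spow a (m+2) = spow a (m+1) * a := rfl
      _ = (a * spow a m) * a := by rw [ih]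
      _ = a * (spow a m * a) := mul_assoc _ _ _
      _ = a * spow a (m+1) := rfl

lemma aux_spow_inv (a : S) (m : ℕ) : inv (spow a m) = spow (inv a) m := by
  induction m with
  | zero => rfl
  | succ m ih =>
    calc inv (spow a (m+1)) = inv (spow a m * a) := rfl
      _ = inv a * inv (spow a m) := aux_inv_mul inv h1 h2 h3 _ _
      _ = inv a * spow (inv a) m := by rw [ih]
      _ = spow (inv a) (m+1) := (aux_spow_succ' inv h1 h2 h3 (inv a) m).symm

lemma aux_spow_reg (a : S) (m : ℕ) :
    spow a m * spow (inv a) m * spow a m = spow a m := by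
  have := h1 (spow a m)
  rwa [aux_spow_inv inv h1 h2 h3] at this

lemma aux_nk_cube (a : S) (k : ℕ) :
    nk inv a (k+1) = nk inv a k * nk inv a k * inv (nk inv a k) := by
  cases k with
  | zero => rfl
  | succ m =>
    have hinvu : inv (spow a (m+1) * spow (inv a) m)
        = spow a m * spow (inv a) (m+1) := by
      rw [aux_inv_mul inv h1 h2 h3, aux_spow_inv inv h1 h2 h3,
        aux_spow_inv inv h1 h2 h3, aux_inv_invol inv h1 h2 h3]
    have hP : spow a (m+1) = a * spow a m := aux_spow_succ' inv h1 h2 h3 a m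
    have factA : spow a (m+1) * (spow (inv a) m * spow a m) = spow a (m+1) := by
      calc spow a (m+1) * (spow (inv a) m * spow a m)
          = (a * spow a m) * (spow (inv a) m * spow a m) := by rw [hP]
        _ = a * (spow a m * spow (inv a) m * spow a m) := by simp only [mul_assoc]
        _ = a * spow a m := by rw [aux_spow_reg inv h1 h2 h3]
        _ = spow a (m+1) := hP.symm
    have factB : (spow a (m+1) * spow (inv a) m) * spow a (m+1)
        = spow a (m+1) * a := by
      calc (spow a (m+1) * spow (inv a) m) * spow a (m+1)
          = (spow a (m+1) * spow (inv a) m) * (spow a m * a) := rfl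
        _ = (spow a (m+1) * (spow (inv a) m * spow a m)) * a := by
              simp only [mul_assoc]
        _ = spow a (m+1) * a := by rw [factA]
    have key : (spow a (m+1) * spow (inv a) m) * (spow a (m+1) * spow (inv a) m)
        * inv (spow a (m+1) * spow (inv a) m)
        = (spow a (m+1) * a) * spow (inv a) (m+1) := by
      calc (spow a (m+1) * spow (inv a) m) * (spow a (m+1) * spow (inv a) m)
          * inv (spow a (m+1) * spow (inv a) m)
          = (spow a (m+1) * spow (inv a) m)
            * ((spow a (m+1) * (spow (inv a) m * spow a m)) * spow (inv a) (m+1)) := by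
            rw [hinvu]; simp only [mul_assoc]
        _ = (spow a (m+1) * spow (inv a) m)
            * (spow a (m+1) * spow (inv a) (m+1)) := by rw [factA]
        _ = ((spow a (m+1) * spow (inv a) m) * spow a (m+1)) * spow (inv a) (m+1) := by
            simp only [mul_assoc]
        _ = (spow a (m+1) * a) * spow (inv a) (m+1) := by rw [factB]
    exact key.symm

lemma aux_conj3 (u v g : S) (hu : inv g * u * g = v) (hv : g * v * inv g = u) :
    inv g * (u * u * inv u) * g = v * v * inv v := by
  have hue : u * (g * inv g) = u := by
    calc u*(g*inv g) = (g*v*inv g)*(g*inv g) := by rw [← hv]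
      _ = (g*v)*(inv g*g*inv g) := by simp only [mul_assoc]
      _ = (g*v)*inv g := by rw [h2]
      _ = u := hv
  have hvinv : inv g * inv u * g = inv v := by
    have hiu := congrArg inv hu
    rw [aux_inv_mul inv h1 h2 h3, aux_inv_mul inv h1 h2 h3,
      aux_inv_invol inv h1 h2 h3] at hiu
    calc inv g * inv u * g = inv g * (inv u * g) := mul_assoc _ _ _
      _ = inv v := hiu
  calc inv g * (u*u*inv u) * g
      = inv g * ((u*(g*inv g))*((u*(g*inv g))*inv u)) * g := by
        rw [hue]; simp only [mul_assoc]
    _ = (inv g*u*g)*((inv g*u*g)*(inv g*inv u*g)) := by simp only [mul_assoc]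
    _ = v*(v*inv v) := by rw [hu, hvinv]
    _ = v*v*inv v := (mul_assoc _ _ _).symm

lemma aux_nkRel_succ (k : ℕ) (a b : S) (h : nkRel inv k a b) :
    nkRel inv (k+1) a b := by
  rcases h with heq | ⟨g, hg1, hg2⟩
  · exact Or.inl (by
      rw [aux_nk_cube inv h1 h2 h3 a k, aux_nk_cube inv h1 h2 h3 b k, heq])
  · refine Or.inr ⟨g, ?_, ?_⟩
    · rw [aux_nk_cube inv h1 h2 h3 a k, aux_nk_cube inv h1 h2 h3 b k]
      exact aux_conj3 inv h1 h2 h3 _ _ _ hg1 hg2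
    · rw [aux_nk_cube inv h1 h2 h3 a k, aux_nk_cube inv h1 h2 h3 b k]
      have := aux_conj3 inv h1 h2 h3 (nk inv b k) (nk inv a k) (inv g)
        (by rw [aux_inv_invol inv h1 h2 h3]; exact hg2)
        (by rw [aux_inv_invol inv h1 h2 h3]; exact hg1)
      rwa [aux_inv_invol inv h1 h2 h3] at this

lemma aux_nkRel_add (k d : ℕ) (a b : S) (h : nkRel inv k a b) :
    nkRel inv (k+1+d) a b := by
  induction d with
  | zero => exact aux_nkRel_succ inv h1 h2 h3 k a b h
  | succ m ih => exact aux_nkRel_succ inv h1 h2 h3 (k+1+m) a b ih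

end Aux

/-- For an inverse semigroup and naturals `i < j`, `a ∼n[i] b` implies `a ∼n[j] b`:
the relations `∼n[k]` form an increasing chain under inclusion. -/
theorem stmt_12 {S : Type*} [Semigroup S] (inv : S → S)
    (hinv : IsInverseSemigroup inv) (i j : ℕ) (hij : i < j) (a b : S)
    (h : nkRel inv i a b) : nkRel inv j a b := by
  obtain ⟨h1, h2, h3⟩ := hinv
  obtain ⟨d, rfl⟩ : ∃ d, j = i + 1 + d := ⟨j - (i+1), by omega⟩
  exact aux_nkRel_add inv h1 h2 h3 i d a b h
end

section
/- In a semigroup in which every product of three or more generators equals a zero element 0, the relation ∼p restricted to any variant (S, ∘) with x ∘ y = x·c·y is transitive. In particular, in the 8-element semigroup SmallSemigroup(8,1843112331), ∼p fails to be transitive, but ∼p is transitive in every variant. -/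
/-- `x ∼p y` for a binary operation `m`: `x = m u v` and `y = m v u` for some `u, v`. -/
def pRelOf {S : Type*} (m : S → S → S) (x y : S) : Prop :=
  ∃ u v : S, x = m u v ∧ y = m v u

/-- The multiplication table of `SmallSemigroup(8, 1843112331)`. -/
def mul8 (x y : Fin 8) : Fin 8 :=
  match x.1, y.1 with
  | 5, 6 => 1
  | 5, 7 => 1
  | 6, 5 => 2
  | 6, 7 => 3
  | 7, 5 => 4
  | 7, 6 => 3
  | _, _ => 0

/-- In any semigroup with a zero element `z` in which every product of three elements
equals `z`, the relation `∼p` of every variant `x ∘ y = x·c·y` is transitive. In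
particular, in the 8-element semigroup `SmallSemigroup(8, 1843112331)`, `∼p` fails to
be transitive, yet `∼p` is transitive in every variant. -/
theorem stmt_14 :
    (∀ (S : Type*) [Semigroup S] (z : S), (∀ s : S, z * s = z ∧ s * z = z) →
      (∀ x y w : S, x * y * w = z) →
      ∀ c : S, Transitive (pRelOf (fun x y => x * c * y))) ∧
    ¬ Transitive (pRelOf mul8) ∧
    (∀ c : Fin 8, Transitive (pRelOf (fun x y => mul8 (mul8 x c) y))) := by
  refine ⟨?_, ?_, ?_⟩
  · intro S _ z hz h3 c x y w hxy hyw
    obtain ⟨u, v, hu, hv⟩ := hxy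
    obtain ⟨a, b, ha, hb⟩ := hyw
    exact ⟨u, v, hu, (hb.trans (h3 b c a)).trans (h3 v c u).symm⟩
  · intro h
    have h21 : pRelOf mul8 2 1 := ⟨6, 5, by decide, by decide⟩
    have h14 : pRelOf mul8 1 4 := ⟨5, 7, by decide, by decide⟩
    exact absurd (h h21 h14) (by unfold pRelOf; decide)
  · intro c
    have h3 : ∀ a b : Fin 8, mul8 (mul8 a c) b = 0 := by revert c; decide
    intro x y w hxy hyw
    obtain ⟨u, v, hu, hv⟩ := hxy
    obtain ⟨a, b, ha, hb⟩ := hyw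
    exact ⟨u, v, hu, (hb.trans (h3 b a)).trans (h3 v u).symm⟩
end

section
/- In any semigroup, if a ∼n b (there exist g, h ∈ S¹ with ag = gb, bh = ha, hag = b, gbh = a) then a ∼p b in S¹, i.e., there exist u, v ∈ S¹ with a = uv and b = vu. -/
/-- In any semigroup, `a ∼n b` (witnessed in `S¹ = WithOne S`) implies `a ∼p b` in `S¹`:
there are `u, v ∈ S¹` with `a = u*v` and `b = v*u`. -/
theorem stmt_18 {S : Type*} [Semigroup S] (a b : S)
    (h : ∃ g h : WithOne S,
      (a : WithOne S) * g = g * (b : WithOne S) ∧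
      (b : WithOne S) * h = h * (a : WithOne S) ∧
      h * (a : WithOne S) * g = (b : WithOne S) ∧
      g * (b : WithOne S) * h = (a : WithOne S)) :
    ∃ u v : WithOne S, (a : WithOne S) = u * v ∧ (b : WithOne S) = v * u := by
  obtain ⟨g, k, h1, h2, h3, h4⟩ := h
  refine ⟨(a : WithOne S) * g, k, ?_, ?_⟩
  · rw [h1]; exact h4.symm
  · rw [← mul_assoc, h3]
end
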